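/- For a fourfold relativistic sum: u ⊕ v ⊕ w ⊕ t = (σ₁ + h²σ₃)/(1 + h²σ₂ + h⁴σ₄), where σᵢ denote the elementary symmetric polynomials in u, v, w, t, assuming all intermediate denominators are invertible. -/
import Mathlib


noncomputable def roplus {k : Type*} [CommRing k] (h u v : k) : k :=
  (u + v) * Ring.inverse (1 + h ^ 2 * u * v)

lemma roplus_step {k : Type*} [CommRing k] (h a b N D : k) (hD : IsUnit D)
    (ha : a = N * Ring.inverse D) (hab : IsUnit (1 + h ^ 2 * a * b)) :
    roplus h a b = (N + b * D) * Ring.inverse (D + h ^ 2 * N * b) := by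
  have hDa : D * a = N := by
    rw [ha, ← mul_assoc, mul_comm D N, mul_assoc, Ring.mul_inverse_cancel D hD, mul_one]
  have hfac : D + h ^ 2 * N * b = D * (1 + h ^ 2 * a * b) := by
    rw [mul_add, mul_one, ← mul_assoc, ← mul_assoc, mul_comm D (h ^ 2), mul_assoc (h ^ 2) D a,
      hDa, mul_assoc]
  rw [hfac, Ring.mul_inverse_rev, roplus]
  have : a + b = (N + b * D) * Ring.inverse D := by
    rw [add_mul, ha, mul_assoc, Ring.mul_inverse_cancel D hD, mul_one]
  rw [this, mul_assoc, mul_comm (Ring.inverse D)]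

theorem roplus_quadruple {k : Type*} [CommRing k] (h u v w t : k)
    (huv : IsUnit (1 + h ^ 2 * u * v))
    (huvw : IsUnit (1 + h ^ 2 * roplus h u v * w))
    (huvwt : IsUnit (1 + h ^ 2 * roplus h (roplus h u v) w * t))
    (hσ : IsUnit (1 + h ^ 2 * (u * v + u * w + u * t + v * w + v * t + w * t)
      + h ^ 4 * (u * v * w * t))) :
    roplus h (roplus h (roplus h u v) w) t =
      ((u + v + w + t) + h ^ 2 * (u * v * w + u * v * t + u * w * t + v * w * t)) *
        Ring.inverse (1 + h ^ 2 * (u * v + u * w + u * t + v * w + v * t + w * t)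
          + h ^ 4 * (u * v * w * t)) := by
  -- three-fold closed form
  have h3 : roplus h (roplus h u v) w =
      ((u + v) + w * (1 + h ^ 2 * u * v)) *
        Ring.inverse ((1 + h ^ 2 * u * v) + h ^ 2 * (u + v) * w) :=
    roplus_step h (roplus h u v) w (u + v) (1 + h ^ 2 * u * v) huv rfl huvw
  -- the three-fold denominator is a unit
  have hD3 : IsUnit ((1 + h ^ 2 * u * v) + h ^ 2 * (u + v) * w) := by
    have hfac : (1 + h ^ 2 * u * v) + h ^ 2 * (u + v) * w =
        (1 + h ^ 2 * u * v) * (1 + h ^ 2 * roplus h u v * w) := by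
      have : (1 + h ^ 2 * u * v) * roplus h u v = u + v := by
        rw [roplus, ← mul_assoc, mul_comm (1 + h ^ 2 * u * v) (u + v), mul_assoc,
          Ring.mul_inverse_cancel _ huv, mul_one]
      linear_combination (-(h ^ 2 * w)) * this
    rw [hfac]; exact huv.mul huvw
  have h4 := roplus_step h (roplus h (roplus h u v) w) t
      ((u + v) + w * (1 + h ^ 2 * u * v)) ((1 + h ^ 2 * u * v) + h ^ 2 * (u + v) * w)
      hD3 h3 huvwt
  rw [h4]
  congr 1
  · ring
  · congr 1
    ring
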